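/- arXiv:1506.00943 — 2 statements merged into one kernel-verified Lean document; each statement's English description precedes it below -/
import Mathlib

section
/- (1) Let f be a TFPL with boundary (u^+,v;w) and let u be a 01-word with u →h u^+. Then WR_v(WL_u(f)) = f. (2) Let f be a TFPL with boundary (u,v^+;w) and let v be a 01-word with v →v v^+. Then WL_u(WR_v(f)) = f. -/
open scoped Classical

namespace TFPLFormal

/-! ## 01-words, modeled as functions `Fin N → Bool` (`true` = 1, `false` = 0) -/

variable {N : ℕ}

/-- the number of ones of a word -/
def count1 (σ : Fin N → Bool) : ℕ := (Finset.univ.filter fun i => σ i = true).card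

/-- the number of zeroes of a word -/
def count0 (σ : Fin N → Bool) : ℕ := (Finset.univ.filter fun i => σ i = false).card

/-- the number of ones among the first `m` letters of a word -/
def pref1 (σ : Fin N → Bool) (m : ℕ) : ℕ :=
  (Finset.univ.filter fun i : Fin N => i.val < m ∧ σ i = true).card

/-- `d(σ)`, the number of inversions of a word: pairs `i < j` with `σ i = 1`, `σ j = 0`. -/
def dinv (σ : Fin N → Bool) : ℕ :=
  (Finset.univ.filter fun p : Fin N × Fin N => p.1 < p.2 ∧ σ p.1 = true ∧ σ p.2 = false).card

/-- the partial order `σ ≤ τ` on words: every prefix of `σ` has at most as many ones as the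
corresponding prefix of `τ`. -/
def wle (σ τ : Fin N → Bool) : Prop := ∀ m : ℕ, pref1 σ m ≤ pref1 τ m

/-- `σ*`: exchange zeroes and ones and reverse the order of the letters. -/
def wstar (σ : Fin N → Bool) : Fin N → Bool := fun i => ! σ i.rev

/-- the list of positions (0-indexed) of the ones of a word, in increasing order -/
def onesList (σ : Fin N → Bool) : List (Fin N) :=
  (Finset.univ.filter fun i => σ i = true).sort (· ≤ ·)

/-- the list of positions (0-indexed) of the zeroes of a word, in increasing order -/
def zerosList (σ : Fin N → Bool) : List (Fin N) :=
  (Finset.univ.filter fun i => σ i = false).sort (· ≤ ·)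

/-- `σ →h τ`: the words have the same number of ones, and for every `j`, if the `j`-th one of
`σ` is at position `i`, then the `j`-th one of `τ` is at position `i-1` or `i`. -/
def hstrip (σ τ : Fin N → Bool) : Prop :=
  count1 σ = count1 τ ∧
  ∀ (j : ℕ) (i : Fin N), (onesList σ)[j]? = some i →
    ∃ i' : Fin N, (onesList τ)[j]? = some i' ∧ (i'.val + 1 = i.val ∨ i' = i)

/-- `σ →v τ`: the words have the same number of zeroes, and for every `j`, if the `j`-th zero of
`σ` is at position `i`, then the `j`-th zero of `τ` is at position `i` or `i+1`. -/
def vstrip (σ τ : Fin N → Bool) : Prop :=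
  count0 σ = count0 τ ∧
  ∀ (j : ℕ) (i : Fin N), (zerosList σ)[j]? = some i →
    ∃ i' : Fin N, (zerosList τ)[j]? = some i' ∧ (i' = i ∨ i'.val = i.val + 1)

/-! ## Young diagrams associated with words -/

/-- the length of the `j`-th row (1-indexed, from the top) of the Young diagram `λ(σ)`:
the number of ones of `σ` preceding the `(|σ|₀ + 1 - j)`-th zero of `σ`.  The diagram has
`|σ|₀` rows (empty rows allowed); outside this range the value is `0`. -/
def lamRow (σ : Fin N → Bool) (j : ℕ) : ℕ :=
  if 1 ≤ j ∧ j ≤ count0 σ then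
    match (zerosList σ)[count0 σ - j]? with
    | some p => pref1 σ p.val
    | none => 0
  else 0

/-- the length of the `j`-th row of the conjugate diagram `λ(σ)'`, i.e. the height of the
`j`-th column of `λ(σ)`. -/
def conjRow (σ : Fin N → Bool) (j : ℕ) : ℕ :=
  if 1 ≤ j then ((Finset.Icc 1 (count0 σ)).filter fun r => j ≤ lamRow σ r).card else 0

/-! ## The coefficients `g_{σ,σ⁺}` -/

/-- the number of ones of `σ` at positions strictly greater than `k` (0-indexed) -/
def suff1 (σ : Fin N → Bool) (k : ℕ) : ℕ :=
  (Finset.univ.filter fun i : Fin N => k < i.val ∧ σ i = true).card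

/-- the number of ones of `σ` at positions strictly between `a` and `b` (0-indexed) -/
def mid1 (σ : Fin N → Bool) (a b : ℕ) : ℕ :=
  (Finset.univ.filter fun i : Fin N => a < i.val ∧ i.val < b ∧ σ i = true).card

/-- the letter of `σ` at (0-indexed) position `a` is `b` -/
def att (σ : Fin N → Bool) (a : ℕ) (b : Bool) : Prop := ∀ i : Fin N, i.val = a → σ i = b

/-- `σ` and `τ` agree at all positions outside `s` -/
def eqOutside (σ τ : Fin N → Bool) (s : Set ℕ) : Prop := ∀ i : Fin N, i.val ∉ s → σ i = τ i

/-- `σ = σL 01 σR` and `σ⁺ = σL 10 σR`, the `01` starting at (0-indexed) position `a` -/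
def C2 (σ σp : Fin N → Bool) (a : ℕ) : Prop :=
  a + 1 < N ∧ att σ a false ∧ att σ (a + 1) true ∧ att σp a true ∧ att σp (a + 1) false ∧
    eqOutside σ σp {a, a + 1}

/-- `σ = σL 01 σM 01 σR` and `σ⁺ = σL 10 σM 10 σR` -/
def C3 (σ σp : Fin N → Bool) (a b : ℕ) : Prop :=
  a + 1 < b ∧ b + 1 < N ∧ att σ a false ∧ att σ (a + 1) true ∧ att σ b false ∧
    att σ (b + 1) true ∧ att σp a true ∧ att σp (a + 1) false ∧ att σp b true ∧
    att σp (b + 1) false ∧ eqOutside σ σp {a, a + 1, b, b + 1}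

/-- `σ = σL 001 σR` and `σ⁺ = σL 100 σR` -/
def C4 (σ σp : Fin N → Bool) (a : ℕ) : Prop :=
  a + 2 < N ∧ att σ a false ∧ att σ (a + 1) false ∧ att σ (a + 2) true ∧
    att σp a true ∧ att σp (a + 1) false ∧ att σp (a + 2) false ∧
    eqOutside σ σp {a, a + 1, a + 2}

/-- `σ = σL 011 σR` and `σ⁺ = σL 110 σR` -/
def C5 (σ σp : Fin N → Bool) (a : ℕ) : Prop :=
  a + 2 < N ∧ att σ a false ∧ att σ (a + 1) true ∧ att σ (a + 2) true ∧
    att σp a true ∧ att σp (a + 1) true ∧ att σp (a + 2) false ∧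
    eqOutside σ σp {a, a + 1, a + 2}

/-- the coefficient `g_{σ,σ⁺}`. -/
noncomputable def gcoef (σ σp : Fin N → Bool) : ℕ :=
  if σp = σ then 1
  else if h : ∃ a, C2 σ σp a then suff1 σ (h.choose + 1) + 1
  else if h : ∃ ab : ℕ × ℕ, C3 σ σp ab.1 ab.2 then
    (suff1 σ (h.choose.2 + 1) + 1) *
      (suff1 σ (h.choose.2 + 1) + mid1 σ (h.choose.1 + 1) h.choose.2 + 1)
  else if h : ∃ a, C4 σ σp a then
    (suff1 σ (h.choose + 2) + 1) * suff1 σ (h.choose + 2) / 2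
  else if h : ∃ a, C5 σ σp a then
    (suff1 σ (h.choose + 2) + 2) * (suff1 σ (h.choose + 2) + 1) / 2
  else 0

/-! ## The graph `G^N` and triangular fully packed loop configurations

`G^N` consists of `N` centered rows (numbered `1, …, N` from top to bottom) of
`3, 5, …, 2N+1` vertices; row `r` occupies the columns `N+1-r, …, N+1+r`.  In addition there
are `2N+1` external vertical edges attached below the bottom row.  A configuration is recorded
by its set of horizontal edges (`(r, c)` stands for the edge from `(r, c)` to `(r, c+1)`) and
its set of vertical edges (`(r, c)` stands for the edge from `(r, c)` to `(r+1, c)`; for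
`r = N` these are the external edges).  `L_1, …, L_N` are the leftmost vertices of the rows,
`R_1, …, R_N` the rightmost ones and `B_1, …, B_N` the even vertices of the bottom row, all
numbered from left to right. -/

structure Config (N : ℕ) where
  horiz : Set (ℕ × ℕ)
  vert : Set (ℕ × ℕ)

/-- `L_i`, the `i`-th leftmost vertex (numbered from left to right, `1 ≤ i ≤ N`) -/
def Lvtx (N i : ℕ) : ℕ × ℕ := (N + 1 - i, i)

/-- `R_i`, the `i`-th rightmost vertex (numbered from left to right, `1 ≤ i ≤ N`) -/
def Rvtx (N i : ℕ) : ℕ × ℕ := (i, N + 1 + i)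

/-- `B_i`, the `i`-th even vertex of the bottom row (`1 ≤ i ≤ N`) -/
def Bvtx (N i : ℕ) : ℕ × ℕ := (N, 2 * i)

/-- the degree of a vertex in a configuration (external edges count) -/
noncomputable def degree (f : Config N) (x : ℕ × ℕ) : ℕ :=
  (if x ∈ f.horiz then 1 else 0) + (if 1 ≤ x.2 ∧ (x.1, x.2 - 1) ∈ f.horiz then 1 else 0) +
    (if x ∈ f.vert then 1 else 0) + (if 1 ≤ x.1 ∧ (x.1 - 1, x.2) ∈ f.vert then 1 else 0)

/-- two vertices are joined by an edge of the configuration -/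
def adj (f : Config N) (x y : ℕ × ℕ) : Prop :=
  (y = (x.1, x.2 + 1) ∧ x ∈ f.horiz) ∨ (x = (y.1, y.2 + 1) ∧ y ∈ f.horiz) ∨
    (y = (x.1 + 1, x.2) ∧ x ∈ f.vert) ∨ (x = (y.1 + 1, y.2) ∧ y ∈ f.vert)

/-- a path of the configuration connects the two vertices -/
def connectedIn (f : Config N) (x y : ℕ × ℕ) : Prop := Relation.ReflTransGen (adj f) x y

/-- valid positions of horizontal edges of `G^N` -/
def hSlot (N : ℕ) (p : ℕ × ℕ) : Prop :=
  1 ≤ p.1 ∧ p.1 ≤ N ∧ N + 1 - p.1 ≤ p.2 ∧ p.2 + 1 ≤ N + 1 + p.1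

/-- valid positions of vertical edges of `G^N` (`p.1 = N` gives the external edges) -/
def vSlot (N : ℕ) (p : ℕ × ℕ) : Prop :=
  (1 ≤ p.1 ∧ p.1 + 1 ≤ N ∧ N + 1 - p.1 ≤ p.2 ∧ p.2 ≤ N + 1 + p.1) ∨
    (p.1 = N ∧ 1 ≤ p.2 ∧ p.2 ≤ 2 * N + 1)

/-- `f` is a triangular fully packed loop configuration of size `N`:
(0) it is a subgraph of `G^N`;
(1) precisely the external edges incident to `B_1, …, B_N` (the even bottom vertices) occur;
(2) the vertices `L_i` and `R_i` have degree `0` or `1`;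
(3) all other vertices have degree `2`;
(4) no path connects two vertices of `{L_i}`, and none connects two vertices of `{R_i}`. -/
def IsTFPL (N : ℕ) (f : Config N) : Prop :=
  (∀ p ∈ f.horiz, hSlot N p) ∧ (∀ p ∈ f.vert, vSlot N p) ∧
  (∀ j : ℕ, (N, j) ∈ f.vert ↔ (1 ≤ j ∧ j ≤ 2 * N + 1 ∧ j % 2 = 0)) ∧
  (∀ i, 1 ≤ i → i ≤ N → degree f (Lvtx N i) ≤ 1) ∧
  (∀ i, 1 ≤ i → i ≤ N → degree f (Rvtx N i) ≤ 1) ∧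
  (∀ r c, 1 ≤ r → r ≤ N → N + 1 - r ≤ c → c ≤ N + 1 + r → c ≠ N + 1 - r → c ≠ N + 1 + r →
      degree f (r, c) = 2) ∧
  (∀ i j, 1 ≤ i → i ≤ N → 1 ≤ j → j ≤ N → i ≠ j → ¬ connectedIn f (Lvtx N i) (Lvtx N j)) ∧
  (∀ i j, 1 ≤ i → i ≤ N → 1 ≤ j → j ≤ N → i ≠ j → ¬ connectedIn f (Rvtx N i) (Rvtx N j))

/-- the boundary `(u, v; w)` of a TFPL:  `u i = 1` iff `L_{i+1}` has degree `1`;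
`v i = 0` iff `R_{i+1}` has degree `1`; `w i = 1` iff `B_{i+1}` is connected with some `L_j`
or with some `B_h`, `h < i+1`  (indices of words are 0-indexed). -/
def HasBoundary (f : Config N) (u v w : Fin N → Bool) : Prop :=
  (∀ i : Fin N, u i = true ↔ degree f (Lvtx N (i.val + 1)) = 1) ∧
  (∀ i : Fin N, v i = false ↔ degree f (Rvtx N (i.val + 1)) = 1) ∧
  (∀ i : Fin N, w i = true ↔
    ((∃ j : Fin N, connectedIn f (Bvtx N (i.val + 1)) (Lvtx N (j.val + 1))) ∨
     (∃ h : Fin N, h < i ∧ connectedIn f (Bvtx N (i.val + 1)) (Bvtx N (h.val + 1)))))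

/-! ## Wieland drift -/

/-- the horizontal edges `L'_{i_j} — L_{i_j}` inserted at the left boundary in left-Wieland
drift with respect to `u⁻ = um` (where `u` is the left boundary word of the TFPL): they are
inserted whenever the `j`-th one of `u` sits at the same position `i_j` as the `j`-th one of
`u⁻`.  The vertex `L'_i` inserted to the left of `L_i` has coordinates `(N+1-i, i-1)`. -/
def insH (u um : Fin N → Bool) : Set (ℕ × ℕ) :=
  {p | ∃ (j : ℕ) (i : Fin N), (onesList um)[j]? = some i ∧ (onesList u)[j]? = some i ∧
        p = (N - i.val, i.val)}

/-- the vertical edges `L'_{i_j} — L_{i_j - 1}` inserted at the left boundary in left-Wieland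
drift with respect to `u⁻ = um`: they are inserted whenever the `j`-th one of `u` sits at
position `i_j - 1`, where `i_j` is the position of the `j`-th one of `u⁻`. -/
def insV (u um : Fin N → Bool) : Set (ℕ × ℕ) :=
  {p | ∃ (j : ℕ) (i i' : Fin N), (onesList um)[j]? = some i ∧ (onesList u)[j]? = some i' ∧
        i'.val + 1 = i.val ∧ p = (N - i.val, i.val)}

/-- the cells of `G^N`, indexed by their top-left corner: the internal unit squares together
with the `2N` external unit squares below the bottom row (which have three surrounding
edges only) -/
def isCell (N i j : ℕ) : Prop :=
  (1 ≤ i ∧ i + 1 ≤ N ∧ N + 1 - i ≤ j ∧ j ≤ N + i) ∨ (i = N ∧ 1 ≤ j ∧ j ≤ 2 * N)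

/-- the odd cells of `G^N` (chessboard coloring, the top left cell being odd) -/
def oddCell (N i j : ℕ) : Prop := isCell N i j ∧ (i + j) % 2 = (N + 1) % 2

/-- a cell is fixed by Wieland gyration iff it contains precisely two edges of the
configuration lying on opposite sides -/
def fixCell (g : Config N) (i j : ℕ) : Prop :=
  (i ≠ N ∧
    ((((i, j) ∈ g.horiz) ∧ ((i + 1, j) ∈ g.horiz) ∧ ((i, j) ∉ g.vert) ∧ ((i, j + 1) ∉ g.vert)) ∨
     (((i, j) ∈ g.vert) ∧ ((i, j + 1) ∈ g.vert) ∧ ((i, j) ∉ g.horiz) ∧ ((i + 1, j) ∉ g.horiz)))) ∨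
  (i = N ∧ ((i, j) ∈ g.vert) ∧ ((i, j + 1) ∈ g.vert) ∧ ((i, j) ∉ g.horiz))

/-- membership of the horizontal edge `p` after applying Wieland gyration to every odd cell:
an edge lying on an odd cell is kept iff that cell is fixed and it was present, or the cell is
not fixed and it was absent; edges on no odd cell are unchanged -/
def gyH (g : Config N) (p : ℕ × ℕ) : Prop :=
  (1 ≤ p.1 ∧ oddCell N (p.1 - 1) p.2 ∧ (fixCell g (p.1 - 1) p.2 ↔ p ∈ g.horiz)) ∨
  (¬ (1 ≤ p.1 ∧ oddCell N (p.1 - 1) p.2) ∧ oddCell N p.1 p.2 ∧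
    (fixCell g p.1 p.2 ↔ p ∈ g.horiz)) ∨
  (¬ (1 ≤ p.1 ∧ oddCell N (p.1 - 1) p.2) ∧ ¬ oddCell N p.1 p.2 ∧ p ∈ g.horiz)

/-- membership of the vertical edge `p` after applying Wieland gyration to every odd cell -/
def gyV (g : Config N) (p : ℕ × ℕ) : Prop :=
  (1 ≤ p.2 ∧ oddCell N p.1 (p.2 - 1) ∧ (fixCell g p.1 (p.2 - 1) ↔ p ∈ g.vert)) ∨
  (¬ (1 ≤ p.2 ∧ oddCell N p.1 (p.2 - 1)) ∧ oddCell N p.1 p.2 ∧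
    (fixCell g p.1 p.2 ↔ p ∈ g.vert)) ∨
  (¬ (1 ≤ p.2 ∧ oddCell N p.1 (p.2 - 1)) ∧ ¬ oddCell N p.1 p.2 ∧ p ∈ g.vert)

/-- left-Wieland drift with respect to `u⁻ = um` of a configuration with left boundary word
`u`: insert the vertices `L'_i` together with the boundary edges prescribed by `u⁻`, apply
Wieland gyration to every odd cell, delete the vertices `R_1, …, R_N` together with their
incident edges, and shift the whole construction one unit to the right. -/
def WLraw (f : Config N) (u um : Fin N → Bool) : Config N :=
  let e : Config N := ⟨f.horiz ∪ insH u um, f.vert ∪ insV u um⟩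
  let g : Config N := ⟨{p | gyH e p}, {p | gyV e p}⟩
  ⟨{p | 1 ≤ p.2 ∧ p.2 ≠ N + p.1 + 1 ∧ (p.1, p.2 - 1) ∈ g.horiz},
   {p | 1 ≤ p.2 ∧ p.2 ≠ N + p.1 + 2 ∧ (p.1, p.2 - 1) ∈ g.vert}⟩

/-- the left boundary word of a configuration -/
noncomputable def leftWord (f : Config N) : Fin N → Bool :=
  fun i => if degree f (Lvtx N (i.val + 1)) = 1 then true else false

/-- `WL_{u⁻}(f)`, left-Wieland drift of `f` with respect to `u⁻ = um` -/
noncomputable def WLd (f : Config N) (um : Fin N → Bool) : Config N := WLraw f (leftWord f) um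

/-- `WL(f)`, left-Wieland drift with respect to the left boundary word of `f` itself -/
noncomputable def WLiter (f : Config N) : Config N := WLd f (leftWord f)

/-- reflection through the vertical symmetry axis of `G^N` -/
def reflect (N : ℕ) (f : Config N) : Config N :=
  ⟨{p | (p.1, 2 * N + 1 - p.2) ∈ f.horiz}, {p | (p.1, 2 * N + 2 - p.2) ∈ f.vert}⟩

/-- `WR_{v⁻}(f)`, right-Wieland drift of `f` with respect to `v⁻ = vm`: the reflection of the
left-Wieland drift, with respect to the reflected-complemented word, of the reflection -/
noncomputable def WRd (f : Config N) (vm : Fin N → Bool) : Config N :=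
  reflect N (WLd (reflect N f) (wstar vm))

/-- `WR(f)`, right-Wieland drift with respect to the right boundary word of `f` itself -/
noncomputable def WRiter (f : Config N) : Config N := reflect N (WLiter (reflect N f))

/-- a configuration is stable if it is invariant under left-Wieland drift -/
def IsStable (N : ℕ) (f : Config N) : Prop := WLiter f = f

/-- `t_{u,v}^w`, the number of TFPLs with boundary `(u, v; w)` -/
noncomputable def tNum (N : ℕ) (u v w : Fin N → Bool) : ℕ :=
  Nat.card {f : Config N // IsTFPL N f ∧ HasBoundary f u v w}

/-- `s_{u,v}^w`, the number of stable TFPLs with boundary `(u, v; w)` -/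
noncomputable def sNum (N : ℕ) (u v w : Fin N → Bool) : ℕ :=
  Nat.card {f : Config N // IsTFPL N f ∧ HasBoundary f u v w ∧ IsStable N f}

/-! ## Column-bounded semistandard skew tableaux: the sets `G_{λ,λ⁺}` -/

/-- `G_{λ,λ⁺}` for diagrams given by their row-length functions `lam ⊆ lamp` (1-indexed rows):
semistandard Young tableaux of skew shape `λ⁺/λ` (positive integer entries on the cells of
`λ⁺` not in `λ`, weakly increasing along rows, strictly increasing down columns) such that all
entries in the `i`-th column counted from the right — out of `ncols` columns, counted
including empty columns — are at most `i`. -/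
structure CBSSYT (lam lamp : ℕ → ℕ) (ncols : ℕ) where
  entry : ℕ → ℕ → ℕ
  support : ∀ r c, entry r c ≠ 0 ↔ (lam r < c ∧ c ≤ lamp r)
  row_weak : ∀ r c, lam r < c → c + 1 ≤ lamp r → entry r c ≤ entry r (c + 1)
  col_strict : ∀ r c, lam r < c → c ≤ lamp r → lam (r + 1) < c → c ≤ lamp (r + 1) →
      entry r c < entry (r + 1) c
  col_bound : ∀ r c, lam r < c → c ≤ lamp r → entry r c + c ≤ ncols + 1

/-! ## Orientations -/

/-- out-degree of a vertex for the orientation `(dH, dV)` (`p ∈ dH`: the horizontal edge at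
`p` points rightwards; `p ∈ dV`: the vertical edge at `p` points downwards) -/
noncomputable def outdeg (f : Config N) (dH dV : Set (ℕ × ℕ)) (x : ℕ × ℕ) : ℕ :=
  (if x ∈ f.horiz ∧ x ∈ dH then 1 else 0) +
  (if 1 ≤ x.2 ∧ (x.1, x.2 - 1) ∈ f.horiz ∧ (x.1, x.2 - 1) ∉ dH then 1 else 0) +
  (if x ∈ f.vert ∧ x ∈ dV then 1 else 0) +
  (if 1 ≤ x.1 ∧ (x.1 - 1, x.2) ∈ f.vert ∧ (x.1 - 1, x.2) ∉ dV then 1 else 0)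

/-- in-degree of a vertex for the orientation `(dH, dV)` -/
noncomputable def indeg (f : Config N) (dH dV : Set (ℕ × ℕ)) (x : ℕ × ℕ) : ℕ :=
  (if x ∈ f.horiz ∧ x ∉ dH then 1 else 0) +
  (if 1 ≤ x.2 ∧ (x.1, x.2 - 1) ∈ f.horiz ∧ (x.1, x.2 - 1) ∈ dH then 1 else 0) +
  (if x ∈ f.vert ∧ x ∉ dV then 1 else 0) +
  (if 1 ≤ x.1 ∧ (x.1 - 1, x.2) ∈ f.vert ∧ (x.1 - 1, x.2) ∈ dV then 1 else 0)

/-!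
Left-Wieland drift gyrates the odd cells of `G^N` extended by the vertices `L'_i`, then deletes
the vertices `R_i` and shifts. After reflecting, right-Wieland drift of the result gyrates the
mirror image of the same configuration again: the edges it inserts at its left boundary are
exactly the edges at `R_1, …, R_N` deleted by the first drift, because the `1`s of `v*` are
matched order-preservingly with the `1`s of the new left boundary word. Gyration of the odd
cells is an involution, and the edges inserted by the first drift are deleted by the second, so
`f` comes back. Part (2) is part (1) applied to the reflection of `f`.
-/

@[ext]
lemma Config.ext {A B : Config N} (hH : A.horiz = B.horiz) (hV : A.vert = B.vert) : A = B := by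
  cases A; cases B; simp_all

def gyrate (g : Config N) : Config N := ⟨{p | gyH g p}, {p | gyV g p}⟩

lemma oddCell_bounds {i j : ℕ} (h : oddCell N i j) :
    1 ≤ i ∧ i ≤ N ∧ 1 ≤ j ∧ j + 1 ≤ 2 * N ∧ (i + j) % 2 = (N + 1) % 2 := by
  obtain ⟨hc | hc, hp⟩ := h <;> omega

section Gyration

variable {g : Config N} {i j : ℕ}

lemma mem_gyrate_top (h : oddCell N i j) :
    (i, j) ∈ (gyrate g).horiz ↔ (fixCell g i j ↔ (i, j) ∈ g.horiz) := by
  have hup : ¬ (1 ≤ i ∧ oddCell N (i - 1) j) := fun ⟨_, h'⟩ => by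
    have := oddCell_bounds h; have := oddCell_bounds h'; omega
  show gyH g (i, j) ↔ _
  unfold gyH
  rw [or_iff_right fun h' => hup ⟨h'.1, h'.2.1⟩, or_iff_left fun h' => h'.2.1 h]
  exact ⟨fun h' => h'.2.2, fun h' => ⟨hup, h, h'⟩⟩

lemma mem_gyrate_bottom (h : oddCell N i j) :
    (i + 1, j) ∈ (gyrate g).horiz ↔ (fixCell g i j ↔ (i + 1, j) ∈ g.horiz) := by
  show gyH g (i + 1, j) ↔ _
  unfold gyH
  simp only [Nat.add_sub_cancel]
  rw [or_iff_left fun h' => (h'.elim (·.1) (·.1)) ⟨by omega, h⟩]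
  exact ⟨fun h' => h'.2.2, fun h' => ⟨by omega, h, h'⟩⟩

lemma mem_gyrate_left (h : oddCell N i j) :
    (i, j) ∈ (gyrate g).vert ↔ (fixCell g i j ↔ (i, j) ∈ g.vert) := by
  have hleft : ¬ (1 ≤ j ∧ oddCell N i (j - 1)) := fun ⟨_, h'⟩ => by
    have := oddCell_bounds h; have := oddCell_bounds h'; omega
  show gyV g (i, j) ↔ _
  unfold gyV
  rw [or_iff_right fun h' => hleft ⟨h'.1, h'.2.1⟩, or_iff_left fun h' => h'.2.1 h]
  exact ⟨fun h' => h'.2.2, fun h' => ⟨hleft, h, h'⟩⟩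

lemma mem_gyrate_right (h : oddCell N i j) :
    (i, j + 1) ∈ (gyrate g).vert ↔ (fixCell g i j ↔ (i, j + 1) ∈ g.vert) := by
  show gyV g (i, j + 1) ↔ _
  unfold gyV
  simp only [Nat.add_sub_cancel]
  rw [or_iff_left fun h' => (h'.elim (·.1) (·.1)) ⟨by omega, h⟩]
  exact ⟨fun h' => h'.2.2, fun h' => ⟨by omega, h, h'⟩⟩

lemma mem_gyrate_horiz_of_not_oddCell (hup : ¬ (1 ≤ i ∧ oddCell N (i - 1) j))
    (hdown : ¬ oddCell N i j) : (i, j) ∈ (gyrate g).horiz ↔ (i, j) ∈ g.horiz := by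
  show gyH g (i, j) ↔ _
  unfold gyH
  rw [or_iff_right fun h' => hup ⟨h'.1, h'.2.1⟩, or_iff_right fun h' => hdown h'.2.1]
  exact ⟨fun h' => h'.2.2, fun h' => ⟨hup, hdown, h'⟩⟩

lemma mem_gyrate_vert_of_not_oddCell (hleft : ¬ (1 ≤ j ∧ oddCell N i (j - 1)))
    (hright : ¬ oddCell N i j) : (i, j) ∈ (gyrate g).vert ↔ (i, j) ∈ g.vert := by
  show gyV g (i, j) ↔ _
  unfold gyV
  rw [or_iff_right fun h' => hleft ⟨h'.1, h'.2.1⟩, or_iff_right fun h' => hright h'.2.1]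
  exact ⟨fun h' => h'.2.2, fun h' => ⟨hleft, hright, h'⟩⟩

/-- An external cell has no bottom side; as long as its right side is present, flipping its
sides cannot make it fixed. -/
lemma fixCell_gyrate (h : oddCell N i j) (hext : i = N → (i, j + 1) ∈ g.vert) :
    fixCell (gyrate g) i j ↔ fixCell g i j := by
  conv_lhs => unfold fixCell
  rw [mem_gyrate_top h, mem_gyrate_bottom h, mem_gyrate_left h, mem_gyrate_right h]
  unfold fixCell
  revert hext
  generalize ((i, j) ∈ g.horiz) = T
  generalize ((i + 1, j) ∈ g.horiz) = B
  generalize ((i, j) ∈ g.vert) = L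
  generalize ((i, j + 1) ∈ g.vert) = R
  by_cases i = N <;> by_cases T <;> by_cases B <;> by_cases L <;> by_cases R <;> simp_all

end Gyration

lemma gyrate_gyrate {g : Config N} (hext : ∀ j, oddCell N N j → (N, j + 1) ∈ g.vert) :
    gyrate (gyrate g) = g := by
  have hext' {i j : ℕ} (h : oddCell N i j) : i = N → (i, j + 1) ∈ g.vert := by
    rintro rfl; exact hext j h
  have twice (F e : Prop) : (F ↔ (F ↔ e)) ↔ e := by by_cases F <;> simp_all
  ext ⟨r, c⟩
  · by_cases hup : 1 ≤ r ∧ oddCell N (r - 1) c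
    · obtain ⟨i, rfl⟩ : ∃ i, r = i + 1 := ⟨r - 1, by omega⟩
      have h : oddCell N i c := hup.2
      rw [mem_gyrate_bottom h, fixCell_gyrate h (hext' h), mem_gyrate_bottom h, twice]
    by_cases hdown : oddCell N r c
    · rw [mem_gyrate_top hdown, fixCell_gyrate hdown (hext' hdown), mem_gyrate_top hdown, twice]
    · rw [mem_gyrate_horiz_of_not_oddCell hup hdown, mem_gyrate_horiz_of_not_oddCell hup hdown]
  · by_cases hleft : 1 ≤ c ∧ oddCell N r (c - 1)
    · obtain ⟨j, rfl⟩ : ∃ j, c = j + 1 := ⟨c - 1, by omega⟩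
      have h : oddCell N r j := hleft.2
      rw [mem_gyrate_right h, fixCell_gyrate h (hext' h), mem_gyrate_right h, twice]
    by_cases hright : oddCell N r c
    · rw [mem_gyrate_left hright, fixCell_gyrate hright (hext' hright), mem_gyrate_left hright,
        twice]
    · rw [mem_gyrate_vert_of_not_oddCell hleft hright,
        mem_gyrate_vert_of_not_oddCell hleft hright]

/-- Reflection through the vertical symmetry axis of `G^N` extended by the vertices `L'_i` of
left-Wieland drift, the frame in which `WLraw` gyrates: `reflect N` shifted one unit left. -/
def mirror (X : Config N) : Config N :=
  ⟨{p | p.2 ≤ 2 * N ∧ (p.1, 2 * N - p.2) ∈ X.horiz},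
   {p | p.2 ≤ 2 * N + 1 ∧ (p.1, 2 * N + 1 - p.2) ∈ X.vert}⟩

section Mirror

variable {X : Config N} {i j r c : ℕ}

lemma mem_mirror_horiz :
    (r, c) ∈ (mirror X).horiz ↔ c ≤ 2 * N ∧ (r, 2 * N - c) ∈ X.horiz :=
  Iff.rfl

lemma mem_mirror_vert :
    (r, c) ∈ (mirror X).vert ↔ c ≤ 2 * N + 1 ∧ (r, 2 * N + 1 - c) ∈ X.vert :=
  Iff.rfl

lemma oddCell_two_mul_sub (hj : j ≤ 2 * N) : oddCell N i (2 * N - j) ↔ oddCell N i j := by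
  unfold oddCell isCell
  omega

lemma fixCell_mirror (hj : j + 1 ≤ 2 * N) :
    fixCell (mirror X) i j ↔ fixCell X i (2 * N - j) := by
  unfold fixCell
  simp only [mem_mirror_horiz, mem_mirror_vert, show 2 * N + 1 - j = 2 * N - j + 1 by omega,
    show 2 * N + 1 - (j + 1) = 2 * N - j by omega, show j ≤ 2 * N by omega,
    show j + 1 ≤ 2 * N + 1 by omega, show j ≤ 2 * N + 1 by omega, true_and]
  generalize ((i, 2 * N - j) ∈ X.horiz) = T
  generalize ((i + 1, 2 * N - j) ∈ X.horiz) = B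
  generalize ((i, 2 * N - j) ∈ X.vert) = L
  generalize ((i, 2 * N - j + 1) ∈ X.vert) = R
  tauto

lemma mem_gyrate_mirror_horiz :
    (r, c) ∈ (gyrate (mirror X)).horiz ↔ (r, c) ∈ (mirror (gyrate X)).horiz := by
  rw [mem_mirror_horiz]
  by_cases hc : c ≤ 2 * N
  swap
  · rw [mem_gyrate_horiz_of_not_oddCell (fun h => by have := oddCell_bounds h.2; omega)
      (fun h => by have := oddCell_bounds h; omega)]
    simp only [mem_mirror_horiz, hc, false_and]
  simp only [hc, true_and]
  by_cases hup : 1 ≤ r ∧ oddCell N (r - 1) c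
  · obtain ⟨i, rfl⟩ : ∃ i, r = i + 1 := ⟨r - 1, by omega⟩
    have h : oddCell N i c := hup.2
    have := oddCell_bounds h
    rw [mem_gyrate_bottom h, mem_gyrate_bottom ((oddCell_two_mul_sub hc).2 h),
      fixCell_mirror (by omega), mem_mirror_horiz]
    simp only [hc, true_and]
  by_cases hdown : oddCell N r c
  · have := oddCell_bounds hdown
    rw [mem_gyrate_top hdown, mem_gyrate_top ((oddCell_two_mul_sub hc).2 hdown),
      fixCell_mirror (by omega), mem_mirror_horiz]
    simp only [hc, true_and]
  rw [mem_gyrate_horiz_of_not_oddCell hup hdown, mem_mirror_horiz,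
    mem_gyrate_horiz_of_not_oddCell (by rwa [oddCell_two_mul_sub hc])
      (by rwa [oddCell_two_mul_sub hc])]
  simp only [hc, true_and]

/-- The cell left of a vertical edge is mirrored to the cell right of the mirrored edge. -/
lemma mem_gyrate_mirror_vert :
    (r, c) ∈ (gyrate (mirror X)).vert ↔ (r, c) ∈ (mirror (gyrate X)).vert := by
  rw [mem_mirror_vert]
  by_cases hc : c ≤ 2 * N + 1
  swap
  · rw [mem_gyrate_vert_of_not_oddCell (fun h => by have := oddCell_bounds h.2; omega)
      (fun h => by have := oddCell_bounds h; omega)]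
    simp only [mem_mirror_vert, hc, false_and]
  simp only [hc, true_and]
  by_cases hleft : 1 ≤ c ∧ oddCell N r (c - 1)
  · obtain ⟨j, rfl⟩ : ∃ j, c = j + 1 := ⟨c - 1, by omega⟩
    have h : oddCell N r j := hleft.2
    have := oddCell_bounds h
    rw [mem_gyrate_right h, show 2 * N + 1 - (j + 1) = 2 * N - j by omega,
      mem_gyrate_left ((oddCell_two_mul_sub (by omega)).2 h), fixCell_mirror (by omega),
      mem_mirror_vert, show 2 * N + 1 - (j + 1) = 2 * N - j by omega]
    simp only [hc, true_and]
  by_cases hright : oddCell N r c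
  · have := oddCell_bounds hright
    rw [mem_gyrate_left hright, show 2 * N + 1 - c = 2 * N - c + 1 by omega,
      mem_gyrate_right ((oddCell_two_mul_sub (by omega)).2 hright), fixCell_mirror (by omega),
      mem_mirror_vert, show 2 * N + 1 - c = 2 * N - c + 1 by omega]
    simp only [hc, true_and]
  rw [mem_gyrate_vert_of_not_oddCell hleft hright, mem_mirror_vert,
    mem_gyrate_vert_of_not_oddCell]
  · simp only [hc, true_and]
  · rintro ⟨_, h⟩
    have := oddCell_bounds h
    rw [show 2 * N + 1 - c - 1 = 2 * N - c by omega, oddCell_two_mul_sub (by omega)] at h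
    exact hright h
  · intro h
    have := oddCell_bounds h
    rw [show 2 * N + 1 - c = 2 * N - (c - 1) by omega, oddCell_two_mul_sub (by omega)] at h
    exact hleft ⟨by omega, h⟩

lemma gyrate_mirror (X : Config N) : gyrate (mirror X) = mirror (gyrate X) := by
  ext ⟨r, c⟩
  · exact mem_gyrate_mirror_horiz
  · exact mem_gyrate_mirror_vert

end Mirror

theorem _root_.StrictMonoOn.finsetSort_image {α β : Type*} [LinearOrder α] [LinearOrder β]
    {s : Finset α} {f : α → β} (hf : StrictMonoOn f s) :
    (s.image f).sort (· ≤ ·) = (s.sort (· ≤ ·)).map f := by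
  rw [← Finset.sort_val, ← Finset.sort_val, Finset.image_val_of_injOn hf.injOn,
    Multiset.map_sort _ _ _ _ fun a ha b hb => (hf.le_iff_le ha hb).symm]

theorem _root_.List.exists_getElem?_eq_some_and_getElem?_map_iff {α β : Type*} {l : List α}
    {f : α → β} {a : α} {b : β} :
    (∃ j : ℕ, l[j]? = some a ∧ (l.map f)[j]? = some b) ↔ a ∈ l ∧ f a = b := by
  constructor
  · rintro ⟨j, ha, hb⟩
    rw [List.getElem?_map, ha, Option.map_some, Option.some_inj] at hb
    exact ⟨List.mem_of_getElem? ha, hb⟩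
  · rintro ⟨ha, rfl⟩
    obtain ⟨j, hj⟩ := List.mem_iff_getElem?.1 ha
    exact ⟨j, hj, by rw [List.getElem?_map, hj, Option.map_some]⟩

lemma mem_onesList {σ : Fin N → Bool} {i : Fin N} : i ∈ onesList σ ↔ σ i = true := by
  simp [onesList]

section Insertion

variable {u um : Fin N → Bool} {ψ : Fin N → Fin N}

lemma mem_insH_of_onesList_eq_map (h : onesList u = (onesList um).map ψ) (i : Fin N) :
    (N - i.val, i.val) ∈ insH u um ↔ um i = true ∧ ψ i = i := by
  rw [← mem_onesList, ← List.exists_getElem?_eq_some_and_getElem?_map_iff, ← h]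
  constructor
  · rintro ⟨j, i₀, h₀, h₁, hp⟩
    obtain rfl : i₀ = i := Fin.ext (congrArg Prod.snd hp).symm
    exact ⟨j, h₀, h₁⟩
  · rintro ⟨j, h₀, h₁⟩
    exact ⟨j, i, h₀, h₁, rfl⟩

lemma mem_insV_of_onesList_eq_map (h : onesList u = (onesList um).map ψ) (i : Fin N) :
    (N - i.val, i.val) ∈ insV u um ↔ um i = true ∧ (ψ i).val + 1 = i.val := by
  constructor
  · rintro ⟨j, i₀, i', h₀, h₁, hsucc, hp⟩
    obtain rfl : i₀ = i := Fin.ext (congrArg Prod.snd hp).symm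
    rw [h] at h₁
    obtain ⟨hi, rfl⟩ := List.exists_getElem?_eq_some_and_getElem?_map_iff.1 ⟨j, h₀, h₁⟩
    exact ⟨mem_onesList.1 hi, hsucc⟩
  · rintro ⟨hi, hsucc⟩
    obtain ⟨j, h₀, h₁⟩ :=
      List.exists_getElem?_eq_some_and_getElem?_map_iff.2 ⟨mem_onesList.2 hi, rfl⟩
    exact ⟨j, i, ψ i, h₀, h ▸ h₁, hsucc, rfl⟩

lemma add_eq_of_mem_insH {r c : ℕ} (h : (r, c) ∈ insH u um) : r + c = N ∧ c < N := by
  obtain ⟨_, i, _, _, hp⟩ := h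
  simp only [Prod.mk.injEq] at hp
  omega

lemma add_eq_of_mem_insV {r c : ℕ} (h : (r, c) ∈ insV u um) : r + c = N ∧ c < N := by
  obtain ⟨_, i, _, _, _, _, hp⟩ := h
  simp only [Prod.mk.injEq] at hp
  omega

end Insertion

def extendLeft (f : Config N) (um : Fin N → Bool) : Config N :=
  ⟨f.horiz ∪ insH (leftWord f) um, f.vert ∪ insV (leftWord f) um⟩

def HasEdgeLeftOfR (f : Config N) (r : ℕ) : Prop := (r, N + r) ∈ f.horiz

def HasEdgeBelowR (f : Config N) (r : ℕ) : Prop := (r, N + 1 + r) ∈ f.vert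

section Drift

variable {f : Config N} {um : Fin N → Bool} {r c : ℕ}

lemma mem_reflect_horiz : (r, c) ∈ (reflect N f).horiz ↔ (r, 2 * N + 1 - c) ∈ f.horiz :=
  Iff.rfl

lemma mem_reflect_vert : (r, c) ∈ (reflect N f).vert ↔ (r, 2 * N + 2 - c) ∈ f.vert :=
  Iff.rfl

lemma mem_WLd_horiz : (r, c) ∈ (WLd f um).horiz ↔
    1 ≤ c ∧ c ≠ N + r + 1 ∧ (r, c - 1) ∈ (gyrate (extendLeft f um)).horiz :=
  Iff.rfl

lemma mem_WLd_vert : (r, c) ∈ (WLd f um).vert ↔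
    1 ≤ c ∧ c ≠ N + r + 2 ∧ (r, c - 1) ∈ (gyrate (extendLeft f um)).vert :=
  Iff.rfl

lemma mem_reflect_WLd_horiz : (r, c) ∈ (reflect N (WLd f um)).horiz ↔
    r + c ≠ N ∧ (r, c) ∈ (mirror (gyrate (extendLeft f um))).horiz := by
  rw [mem_reflect_horiz, mem_WLd_horiz, mem_mirror_horiz]
  constructor
  · rintro ⟨_, _, h⟩
    exact ⟨by omega, by omega, by rwa [show 2 * N - c = 2 * N + 1 - c - 1 by omega]⟩
  · rintro ⟨_, _, h⟩
    exact ⟨by omega, by omega, by rwa [show 2 * N + 1 - c - 1 = 2 * N - c by omega]⟩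

lemma mem_reflect_WLd_vert : (r, c) ∈ (reflect N (WLd f um)).vert ↔
    r + c ≠ N ∧ (r, c) ∈ (mirror (gyrate (extendLeft f um))).vert := by
  rw [mem_reflect_vert, mem_WLd_vert, mem_mirror_vert]
  constructor
  · rintro ⟨_, _, h⟩
    exact ⟨by omega, by omega, by rwa [show 2 * N + 1 - c = 2 * N + 2 - c - 1 by omega]⟩
  · rintro ⟨_, _, h⟩
    exact ⟨by omega, by omega, by rwa [show 2 * N + 2 - c - 1 = 2 * N + 1 - c by omega]⟩

lemma mem_extendLeft_horiz (h : ¬ (r + c = N ∧ c < N)) :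
    (r, c) ∈ (extendLeft f um).horiz ↔ (r, c) ∈ f.horiz :=
  or_iff_left fun h' => h (add_eq_of_mem_insH h')

lemma mem_extendLeft_vert (h : ¬ (r + c = N ∧ c < N)) :
    (r, c) ∈ (extendLeft f um).vert ↔ (r, c) ∈ f.vert :=
  or_iff_left fun h' => h (add_eq_of_mem_insV h')

lemma mem_gyrate_extendLeft_horiz_leftOfR :
    (r, N + r) ∈ (gyrate (extendLeft f um)).horiz ↔ HasEdgeLeftOfR f r := by
  rw [mem_gyrate_horiz_of_not_oddCell, mem_extendLeft_horiz (by omega), HasEdgeLeftOfR] <;>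
  · unfold oddCell isCell
    omega

lemma mem_gyrate_extendLeft_vert_belowR :
    (r, N + 1 + r) ∈ (gyrate (extendLeft f um)).vert ↔ HasEdgeBelowR f r := by
  rw [mem_gyrate_vert_of_not_oddCell, mem_extendLeft_vert (by omega), HasEdgeBelowR] <;>
  · unfold oddCell isCell
    omega

lemma degree_Lvtx_reflect_WLd (i : Fin N) :
    degree (reflect N (WLd f um)) (Lvtx N (i.val + 1)) =
      (if (N - i.val, N + (N - i.val) - 1) ∈ (gyrate (extendLeft f um)).horiz then 1 else 0) +
      (if (N - i.val, N + (N - i.val)) ∈ (gyrate (extendLeft f um)).vert then 1 else 0) := by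
  have hi := i.isLt
  simp only [degree, Lvtx, mem_reflect_WLd_horiz, mem_reflect_WLd_vert, mem_mirror_horiz,
    mem_mirror_vert, show N + 1 - (i.val + 1) = N - i.val by omega,
    show i.val + 1 - 1 = i.val by omega, show 2 * N - (i.val + 1) = N + (N - i.val) - 1 by omega,
    show 2 * N + 1 - (i.val + 1) = N + (N - i.val) by omega,
    show N - i.val + (i.val + 1) ≠ N by omega, show i.val + 1 ≤ 2 * N by omega,
    show i.val + 1 ≤ 2 * N + 1 by omega, show N - i.val + i.val = N by omega,
    show N - i.val - 1 + (i.val + 1) = N by omega, ne_eq, not_true_eq_false, not_false_eq_true,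
    true_and, false_and, and_false, if_false, add_zero]

end Drift

lemma wstar_wstar (σ : Fin N → Bool) : wstar (wstar σ) = σ := by
  funext i
  simp [wstar]

section Reflection

variable {f : Config N}

lemma reflect_reflect (hH : ∀ p ∈ f.horiz, hSlot N p) (hV : ∀ p ∈ f.vert, vSlot N p) :
    reflect N (reflect N f) = f := by
  ext ⟨r, c⟩
  · rw [mem_reflect_horiz, mem_reflect_horiz]
    constructor <;> intro h <;> have := hH _ h <;> unfold hSlot at this
    · rwa [show 2 * N + 1 - (2 * N + 1 - c) = c by omega] at h
    · rwa [show 2 * N + 1 - (2 * N + 1 - c) = c by omega]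
  · rw [mem_reflect_vert, mem_reflect_vert]
    constructor <;> intro h <;> have := hV _ h <;> unfold vSlot at this
    · rwa [show 2 * N + 2 - (2 * N + 2 - c) = c by omega] at h
    · rwa [show 2 * N + 2 - (2 * N + 2 - c) = c by omega]

lemma degree_reflect {r c : ℕ} (h1 : 1 ≤ c) (h2 : c ≤ 2 * N + 1) :
    degree (reflect N f) (r, c) = degree f (r, 2 * N + 2 - c) := by
  simp only [degree, mem_reflect_horiz, mem_reflect_vert, h1, true_and,
    show 2 * N + 1 - (c - 1) = 2 * N + 2 - c by omega,
    show 2 * N + 2 - c - 1 = 2 * N + 1 - c by omega, show 1 ≤ 2 * N + 2 - c by omega]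
  omega

lemma degree_Rvtx_of_slot (hH : ∀ p ∈ f.horiz, hSlot N p)
    (hV : ∀ p ∈ f.vert, vSlot N p) {r : ℕ} (hr : 1 ≤ r) :
    degree f (Rvtx N r) =
      (if HasEdgeLeftOfR f r then 1 else 0) + (if HasEdgeBelowR f r then 1 else 0) := by
  have hright : (r, N + 1 + r) ∉ f.horiz := fun h => by
    have := hH _ h; unfold hSlot at this; omega
  have hup : (r - 1, N + 1 + r) ∉ f.vert := fun h => by
    have := hV _ h; unfold vSlot at this; omega
  simp only [degree, Rvtx, HasEdgeLeftOfR, HasEdgeBelowR, hright, hup,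
    show N + 1 + r - 1 = N + r by omega, show 1 ≤ N + 1 + r by omega, true_and, and_false,
    if_false, zero_add, add_zero]
  congr

end Reflection

lemma ite_add_ite_eq_one {A B : Prop} [Decidable A] [Decidable B] :
    (if A then 1 else 0) + (if B then 1 else 0) = 1 ↔ (A ↔ ¬ B) := by
  by_cases A <;> by_cases B <;> simp [*]

lemma iff_iff_not_iff_iff_not {F T R : Prop} : ((F ↔ T) ↔ ¬ (F ↔ R)) ↔ (T ↔ ¬ R) := by
  tauto

lemma iff_not_iff_or_of_sum_eq_two {L T R B : Prop} [Decidable L] [Decidable T] [Decidable R]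
    [Decidable B]
    (h : (if L then 1 else 0) + (if T then 1 else 0) + (if R then 1 else 0) +
      (if B then 1 else 0) = 2) (hLB : ¬ (B ∧ L)) : (T ↔ ¬ R) ↔ L ∨ B := by
  by_cases L <;> by_cases T <;> by_cases R <;> by_cases B <;> simp_all

lemma leftWord_eq_true_iff (g : Config N) (i : Fin N) :
    leftWord g i = true ↔ degree g (Lvtx N (i.val + 1)) = 1 := by
  unfold leftWord
  split_ifs <;> simp [*]

/-- What `WLd_reflect_WLd` needs from a TFPL `f` with right boundary word `v`; reflections of
TFPLs provide it as well. -/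
structure HasRightBoundary (f : Config N) (v : Fin N → Bool) : Prop where
  horiz_slot : ∀ p ∈ f.horiz, hSlot N p
  vert_slot : ∀ p ∈ f.vert, vSlot N p
  vert_external : ∀ j : ℕ, (N, j) ∈ f.vert ↔ (1 ≤ j ∧ j ≤ 2 * N + 1 ∧ j % 2 = 0)
  degree_Rvtx_le : ∀ r, 1 ≤ r → r ≤ N → degree f (Rvtx N r) ≤ 1
  degree_left_of_Rvtx : ∀ r, 1 ≤ r → r ≤ N → degree f (r, N + r) = 2
  not_joined_Rvtx_succ : ∀ r, ¬ (HasEdgeBelowR f r ∧ HasEdgeLeftOfR f (r + 1))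
  word : ∀ i : Fin N, v i = false ↔ degree f (Rvtx N (i.val + 1)) = 1

/-- Matches the `1`s of `v*` with those of the left word of `reflect N (WLd f u)`; it moves each
`1` by at most one place to the left, i.e. it witnesses `v* →h` that word. -/
noncomputable def matchOnes (f : Config N) (i : Fin N) : Fin N :=
  if HasEdgeLeftOfR f (N - i) then i else ⟨i - 1, by omega⟩

namespace HasRightBoundary

variable {f : Config N}

theorem of_isTFPL {v : Fin N → Bool} (hf : IsTFPL N f)
    (hv : ∀ i : Fin N, v i = false ↔ degree f (Rvtx N (i.val + 1)) = 1) :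
    HasRightBoundary f v := by
  obtain ⟨hH, hV, hext, -, hR, hdeg, -, hRR⟩ := hf
  refine ⟨hH, hV, hext, hR, fun r h1 h2 => hdeg r (N + r) h1 h2 (by omega) (by omega)
    (by omega) (by omega), fun r ⟨hB, hL⟩ => ?_, hv⟩
  have hBslot := hV _ hB
  have hLslot := hH _ hL
  simp only [vSlot, hSlot] at hBslot hLslot
  refine hRR r (r + 1) (by omega) (by omega) (by omega) (by omega) (by omega)
    (.head (Or.inr (Or.inr (Or.inl ⟨rfl, hB⟩))) (.single (Or.inl ⟨rfl, ?_⟩)))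
  rwa [HasEdgeLeftOfR, show N + (r + 1) = N + 1 + r by omega] at hL

theorem reflect_of_isTFPL {u : Fin N → Bool} (hf : IsTFPL N f)
    (hu : ∀ i : Fin N, u i = true ↔ degree f (Lvtx N (i.val + 1)) = 1) :
    HasRightBoundary (reflect N f) (wstar u) := by
  obtain ⟨hH, hV, hext, hL, -, hdeg, hLL, -⟩ := hf
  refine ⟨?_, ?_, ?_, fun r h1 h2 => ?_, fun r h1 h2 => ?_, fun r ⟨hB, hL'⟩ => ?_,
    fun i => ?_⟩
  · rintro ⟨r, c⟩ h
    have := hH _ h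
    simp only [hSlot] at this ⊢
    omega
  · rintro ⟨r, c⟩ h
    have := hV _ h
    simp only [vSlot] at this ⊢
    omega
  · intro j
    rw [mem_reflect_vert, hext]
    omega
  · rw [Rvtx, degree_reflect (by omega) (by omega)]
    convert hL (N + 1 - r) (by omega) (by omega) using 2
    simp only [Lvtx, Prod.mk.injEq]; omega
  · rw [degree_reflect (by omega) (by omega)]
    exact hdeg r _ h1 h2 (by omega) (by omega) (by omega) (by omega)
  · rw [HasEdgeBelowR, mem_reflect_vert, show 2 * N + 2 - (N + 1 + r) = N + 1 - r by omega] at hB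
    rw [HasEdgeLeftOfR, mem_reflect_horiz, show 2 * N + 1 - (N + (r + 1)) = N - r by omega] at hL'
    have hBslot := hV _ hB
    have hLslot := hH _ hL'
    simp only [vSlot, hSlot] at hBslot hLslot
    refine hLL (N - r) (N + 1 - r) (by omega) (by omega) (by omega) (by omega) (by omega)
      (.head (Or.inl ⟨rfl, ?_⟩) (.single (Or.inr (Or.inr (Or.inr ⟨?_, ?_⟩)))))
    · rwa [Lvtx, show N + 1 - (N - r) = r + 1 by omega]
    · simp only [Lvtx, Prod.mk.injEq]; omega
    · rwa [Lvtx, show N + 1 - (N + 1 - r) = r by omega]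
  · have hrev : i.rev.val + 1 = N - i := by rw [Fin.val_rev]; omega
    rw [wstar, Bool.not_eq_false', hu, hrev, Rvtx, degree_reflect (by omega) (by omega)]
    simp only [Lvtx, show N + 1 - (N - i.val) = i.val + 1 by omega,
      show 2 * N + 2 - (N + 1 + (i.val + 1)) = N - i.val by omega]

section

variable {v u : Fin N → Bool} (hf : HasRightBoundary f v)
include hf

lemma degree_Rvtx {r : ℕ} (hr : 1 ≤ r) :
    degree f (Rvtx N r) =
      (if HasEdgeLeftOfR f r then 1 else 0) + (if HasEdgeBelowR f r then 1 else 0) :=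
  degree_Rvtx_of_slot hf.horiz_slot hf.vert_slot hr

lemma not_leftOfR_and_belowR (r : ℕ) : ¬ (HasEdgeLeftOfR f r ∧ HasEdgeBelowR f r) := by
  rintro ⟨hL, hB⟩
  have := hf.horiz_slot _ hL
  unfold hSlot at this
  have hdeg := hf.degree_Rvtx_le r (by omega) (by omega)
  rw [hf.degree_Rvtx (by omega), if_pos hL, if_pos hB] at hdeg
  omega

lemma not_leftOfR_zero : ¬ HasEdgeLeftOfR f 0 := fun h => by
  have := hf.horiz_slot _ h; unfold hSlot at this; omega

lemma not_belowR_zero : ¬ HasEdgeBelowR f 0 := fun h => by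
  have := hf.vert_slot _ h
  unfold vSlot at this
  obtain rfl : N = 0 := by omega
  have := (hf.vert_external _).1 h
  omega

lemma not_belowR_N : ¬ HasEdgeBelowR f N := fun h => by
  have := (hf.vert_external _).1 h
  omega

lemma wstar_eq_true_iff (i : Fin N) :
    wstar v i = true ↔ HasEdgeLeftOfR f (N - i) ∨ HasEdgeBelowR f (N - i) := by
  have hrev : i.rev.val + 1 = N - i := by rw [Fin.val_rev]; omega
  rw [wstar, Bool.not_eq_true', hf.word, hrev, hf.degree_Rvtx (by omega), ite_add_ite_eq_one]
  have := hf.not_leftOfR_and_belowR (N - i)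
  tauto

/-- Gyration of the odd cell left of `(N - i, N + (N - i))` flips both or neither of its top and
right sides, so it does not change whether exactly one of them is present; by the degree
condition at that vertex, this happens iff `R_{N-i}` or `R_{N-i-1}` is joined to it. -/
lemma leftWord_reflect_WLd (i : Fin N) :
    leftWord (reflect N (WLd f u)) i = true ↔
      HasEdgeLeftOfR f (N - i) ∨ HasEdgeBelowR f (N - i - 1) := by
  have hi := i.isLt
  set r := N - i.val with hr
  have hodd : oddCell N r (N + r - 1) := by unfold oddCell isCell; omega
  have hT : (r, N + r - 1) ∈ (gyrate (extendLeft f u)).horiz ↔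
      (fixCell (extendLeft f u) r (N + r - 1) ↔ (r, N + r - 1) ∈ f.horiz) := by
    rw [mem_gyrate_top hodd, mem_extendLeft_horiz (by omega)]
  have hR : (r, N + r) ∈ (gyrate (extendLeft f u)).vert ↔
      (fixCell (extendLeft f u) r (N + r - 1) ↔ (r, N + r) ∈ f.vert) := by
    have := mem_gyrate_right hodd (g := extendLeft f u)
    rwa [show N + r - 1 + 1 = N + r by omega, mem_extendLeft_vert (by omega)] at this
  have hdeg := hf.degree_left_of_Rvtx r (by omega) (by omega)
  have hno := hf.not_joined_Rvtx_succ (r - 1)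
  simp only [degree, HasEdgeLeftOfR, HasEdgeBelowR, show r - 1 + 1 = r by omega,
    show N + 1 + (r - 1) = N + r by omega, show 1 ≤ N + r by omega, show 1 ≤ r by omega,
    true_and] at hdeg hno ⊢
  rw [leftWord_eq_true_iff, degree_Lvtx_reflect_WLd, ← hr, ite_add_ite_eq_one, hT, hR,
    iff_iff_not_iff_iff_not]
  exact iff_not_iff_or_of_sum_eq_two hdeg hno

lemma pos_of_belowR {i : Fin N} (h : HasEdgeBelowR f (N - i)) : 1 ≤ i.val := by
  by_contra h0
  exact hf.not_belowR_N (by rwa [show N - i.val = N by omega] at h)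

lemma strictMonoOn_matchOnes :
    StrictMonoOn (matchOnes f) ↑(Finset.univ.filter fun i => wstar v i = true) := by
  intro i hi i' hi' hlt
  simp only [Finset.mem_coe, Finset.mem_filter, Finset.mem_univ, true_and,
    hf.wstar_eq_true_iff] at hi hi'
  rw [Fin.lt_def] at hlt
  rw [Fin.lt_def, matchOnes, matchOnes]
  split_ifs with hL hL'
  · exact hlt
  · have hB' : HasEdgeBelowR f (N - i') := hi'.resolve_left hL'
    have hi'N := i'.isLt
    show i.val < i'.val - 1
    by_contra hnext
    refine hf.not_joined_Rvtx_succ (N - i') ⟨hB', ?_⟩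
    rwa [show N - i'.val + 1 = N - i.val by omega]
  · show i.val - 1 < i'.val
    omega
  · have := hf.pos_of_belowR (hi.resolve_left hL)
    show i.val - 1 < i'.val - 1
    omega

lemma image_matchOnes :
    (Finset.univ.filter fun i => wstar v i = true).image (matchOnes f) =
      Finset.univ.filter fun i => leftWord (reflect N (WLd f u)) i = true := by
  ext y
  simp only [Finset.mem_image, Finset.mem_filter, Finset.mem_univ, true_and,
    hf.wstar_eq_true_iff, hf.leftWord_reflect_WLd]
  constructor
  · rintro ⟨i, hi, rfl⟩
    unfold matchOnes
    split_ifs with hL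
    · exact Or.inl hL
    · have hB := hi.resolve_left hL
      have := hf.pos_of_belowR hB
      right
      rwa [show N - (i.val - 1) - 1 = N - i.val by omega]
  · rintro (hL | hB)
    · exact ⟨y, Or.inl hL, if_pos hL⟩
    · have hy : y.val + 1 < N := by
        by_contra h
        exact hf.not_belowR_zero (by rwa [show N - y.val - 1 = 0 by omega] at hB)
      have hB' : HasEdgeBelowR f (N - (y.val + 1)) := by rwa [Nat.sub_add_eq]
      refine ⟨⟨y.val + 1, hy⟩, Or.inr hB', ?_⟩
      rw [matchOnes, if_neg fun hL => hf.not_leftOfR_and_belowR _ ⟨hL, hB'⟩]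
      rfl

lemma onesList_leftWord_reflect_WLd :
    onesList (leftWord (reflect N (WLd f u))) = (onesList (wstar v)).map (matchOnes f) := by
  rw [onesList, onesList, ← hf.image_matchOnes, hf.strictMonoOn_matchOnes.finsetSort_image]

lemma mem_insH_reflect_WLd {r c : ℕ} (hrc : r + c = N) :
    (r, c) ∈ insH (leftWord (reflect N (WLd f u))) (wstar v) ↔ HasEdgeLeftOfR f r := by
  rcases Nat.lt_or_ge c N with hc | hc
  · obtain ⟨i, rfl, rfl⟩ : ∃ i : Fin N, r = N - i.val ∧ c = i.val :=
      ⟨⟨c, hc⟩, by simp; omega, rfl⟩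
    rw [mem_insH_of_onesList_eq_map hf.onesList_leftWord_reflect_WLd, hf.wstar_eq_true_iff,
      matchOnes]
    split_ifs with hL
    · simp [hL]
    · refine iff_of_false (fun ⟨hB, heq⟩ => ?_) hL
      have := hf.pos_of_belowR (hB.resolve_left hL)
      rw [Fin.ext_iff] at heq
      simp only at heq
      omega
  · obtain rfl : r = 0 := by omega
    exact iff_of_false (fun h => by have := (add_eq_of_mem_insH h).2; omega)
      hf.not_leftOfR_zero

lemma mem_insV_reflect_WLd {r c : ℕ} (hrc : r + c = N) :
    (r, c) ∈ insV (leftWord (reflect N (WLd f u))) (wstar v) ↔ HasEdgeBelowR f r := by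
  rcases Nat.lt_or_ge c N with hc | hc
  · obtain ⟨i, rfl, rfl⟩ : ∃ i : Fin N, r = N - i.val ∧ c = i.val :=
      ⟨⟨c, hc⟩, by simp; omega, rfl⟩
    rw [mem_insV_of_onesList_eq_map hf.onesList_leftWord_reflect_WLd, hf.wstar_eq_true_iff,
      matchOnes]
    split_ifs with hL
    · exact iff_of_false (fun h => by omega) fun hB => hf.not_leftOfR_and_belowR _ ⟨hL, hB⟩
    · simp only [hL, false_or, and_iff_left_iff_imp]
      intro hB
      have := hf.pos_of_belowR hB
      omega
  · obtain rfl : r = 0 := by omega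
    exact iff_of_false (fun h => by have := (add_eq_of_mem_insV h).2; omega)
      hf.not_belowR_zero

/-- The boundary edges inserted by the second drift are exactly the edges at `R_1, …, R_N`
deleted by the first one. -/
lemma extendLeft_reflect_WLd :
    extendLeft (reflect N (WLd f u)) (wstar v) = mirror (gyrate (extendLeft f u)) := by
  ext ⟨r, c⟩
  · show (r, c) ∈ (reflect N (WLd f u)).horiz ∨ _ ↔ _
    rw [mem_reflect_WLd_horiz]
    by_cases hrc : r + c = N
    · rw [hf.mem_insH_reflect_WLd hrc, mem_mirror_horiz, show 2 * N - c = N + r by omega,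
        mem_gyrate_extendLeft_horiz_leftOfR]
      exact ⟨fun h => ⟨by omega, h.resolve_left fun h' => h'.1 hrc⟩, fun h => Or.inr h.2⟩
    · rw [or_iff_left fun h => hrc (add_eq_of_mem_insH h).1]
      exact and_iff_right hrc
  · show (r, c) ∈ (reflect N (WLd f u)).vert ∨ _ ↔ _
    rw [mem_reflect_WLd_vert]
    by_cases hrc : r + c = N
    · rw [hf.mem_insV_reflect_WLd hrc, mem_mirror_vert, show 2 * N + 1 - c = N + 1 + r by omega,
        mem_gyrate_extendLeft_vert_belowR]
      exact ⟨fun h => ⟨by omega, h.resolve_left fun h' => h'.1 hrc⟩, fun h => Or.inr h.2⟩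
    · rw [or_iff_left fun h => hrc (add_eq_of_mem_insV h).1]
      exact and_iff_right hrc

lemma gyrate_extendLeft_gyrate :
    gyrate (extendLeft (reflect N (WLd f u)) (wstar v)) = mirror (extendLeft f u) := by
  rw [hf.extendLeft_reflect_WLd, gyrate_mirror, gyrate_gyrate]
  intro j hj
  have := oddCell_bounds hj
  exact Or.inl ((hf.vert_external _).2 (by omega))

theorem WLd_reflect_WLd : WLd (reflect N (WLd f u)) (wstar v) = reflect N f := by
  ext ⟨r, c⟩
  · rw [mem_WLd_horiz, hf.gyrate_extendLeft_gyrate, mem_mirror_horiz, mem_reflect_horiz]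
    constructor
    · rintro ⟨_, _, _, h⟩
      rwa [show 2 * N - (c - 1) = 2 * N + 1 - c by omega, mem_extendLeft_horiz (by omega)] at h
    · intro h
      have := hf.horiz_slot _ h
      unfold hSlot at this
      refine ⟨by omega, by omega, by omega, ?_⟩
      rwa [show 2 * N - (c - 1) = 2 * N + 1 - c by omega, mem_extendLeft_horiz (by omega)]
  · rw [mem_WLd_vert, hf.gyrate_extendLeft_gyrate, mem_mirror_vert, mem_reflect_vert]
    constructor
    · rintro ⟨_, _, _, h⟩
      rwa [show 2 * N + 1 - (c - 1) = 2 * N + 2 - c by omega,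
        mem_extendLeft_vert (by omega)] at h
    · intro h
      have := hf.vert_slot _ h
      unfold vSlot at this
      refine ⟨by omega, by omega, by omega, ?_⟩
      rwa [show 2 * N + 1 - (c - 1) = 2 * N + 2 - c by omega, mem_extendLeft_vert (by omega)]

end

end HasRightBoundary

/-- (1) If `f` is a TFPL with boundary `(u⁺, v; w)` and `u` is a word with
`u →h u⁺`, then `WR_v(WL_u(f)) = f`.  (2) If `f` is a TFPL with boundary `(u, v⁺; w)` and `v`
is a word with `v →v v⁺`, then `WL_u(WR_v(f)) = f`. -/
theorem WL_WR_inverse (N : ℕ) :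
    (∀ (f : Config N) (up v w u : Fin N → Bool), IsTFPL N f → HasBoundary f up v w →
        hstrip u up → WRd (WLd f u) v = f) ∧
    (∀ (f : Config N) (u vp w v : Fin N → Bool), IsTFPL N f → HasBoundary f u vp w →
        vstrip v vp → WLd (WRd f v) u = f) := by
  refine ⟨fun f up v w u hf hb _ => ?_, fun f u vp w v hf hb _ => ?_⟩
  · rw [WRd, (HasRightBoundary.of_isTFPL hf hb.2.1).WLd_reflect_WLd,
      reflect_reflect hf.1 hf.2.1]
  · have h := (HasRightBoundary.reflect_of_isTFPL hf hb.1).WLd_reflect_WLd (u := wstar v)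
    rwa [wstar_wstar, reflect_reflect hf.1 hf.2.1] at h

end TFPLFormal
end

section
/- Let f be a subgraph of G^N (together with the external edges) satisfying conditions (1), (2), (3) of the definition of a TFPL. Suppose the edges of f can be oriented so that every edge incident to one of the vertices L_1,…,L_N is directed away from that vertex, every edge incident to one of the vertices R_1,…,R_N is directed toward that vertex, and every other vertex of G^N is incident to exactly one incoming and one outgoing edge of f. Then condition (4) holds automatically: no path of f connects two vertices among L_1,…,L_N, and no path of f connects two vertices among R_1,…,R_N; in particular f is a TFPL. -/
open scoped Classical

namespace TFPLFormal

/-! ## 01-words, modeled as functions `Fin N → Bool` (`true` = 1, `false` = 0) -/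

variable {N : ℕ}

section Statement9Aux

variable {N : ℕ}

/-- the directed edge relation induced on `f` by the orientation `(dH, dV)` -/
def Dir (f : Config N) (dH dV : Set (ℕ × ℕ)) (x y : ℕ × ℕ) : Prop :=
  (y = (x.1, x.2 + 1) ∧ x ∈ f.horiz ∧ x ∈ dH) ∨
  (x = (y.1, y.2 + 1) ∧ y ∈ f.horiz ∧ y ∉ dH) ∨
  (y = (x.1 + 1, x.2) ∧ x ∈ f.vert ∧ x ∈ dV) ∨
  (x = (y.1 + 1, y.2) ∧ y ∈ f.vert ∧ y ∉ dV)

lemma adj_iff_dir (f : Config N) (dH dV : Set (ℕ × ℕ)) (x y : ℕ × ℕ) :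
    adj f x y ↔ Dir f dH dV x y ∨ Dir f dH dV y x := by
  constructor
  · intro h
    rcases h with ⟨hy, hm⟩ | ⟨hx, hm⟩ | ⟨hy, hm⟩ | ⟨hx, hm⟩
    · by_cases hd : x ∈ dH
      · exact Or.inl (Or.inl ⟨hy, hm, hd⟩)
      · exact Or.inr (Or.inr (Or.inl ⟨hy, hm, hd⟩))
    · by_cases hd : y ∈ dH
      · exact Or.inr (Or.inl ⟨hx, hm, hd⟩)
      · exact Or.inl (Or.inr (Or.inl ⟨hx, hm, hd⟩))
    · by_cases hd : x ∈ dV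
      · exact Or.inl (Or.inr (Or.inr (Or.inl ⟨hy, hm, hd⟩)))
      · exact Or.inr (Or.inr (Or.inr (Or.inr ⟨hy, hm, hd⟩)))
    · by_cases hd : y ∈ dV
      · exact Or.inr (Or.inr (Or.inr (Or.inl ⟨hx, hm, hd⟩)))
      · exact Or.inl (Or.inr (Or.inr (Or.inr ⟨hx, hm, hd⟩)))
  · intro h
    rcases h with (⟨hy, hm, _⟩ | ⟨hx, hm, _⟩ | ⟨hy, hm, _⟩ | ⟨hx, hm, _⟩) |
      (⟨hx, hm, _⟩ | ⟨hy, hm, _⟩ | ⟨hx, hm, _⟩ | ⟨hy, hm, _⟩)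
    · exact Or.inl ⟨hy, hm⟩
    · exact Or.inr (Or.inl ⟨hx, hm⟩)
    · exact Or.inr (Or.inr (Or.inl ⟨hy, hm⟩))
    · exact Or.inr (Or.inr (Or.inr ⟨hx, hm⟩))
    · exact Or.inr (Or.inl ⟨hx, hm⟩)
    · exact Or.inl ⟨hy, hm⟩
    · exact Or.inr (Or.inr (Or.inr ⟨hx, hm⟩))
    · exact Or.inr (Or.inr (Or.inl ⟨hy, hm⟩))

lemma dir_out_cases {f : Config N} {dH dV : Set (ℕ × ℕ)} {x y : ℕ × ℕ}
    (h : Dir f dH dV x y) :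
    (y = (x.1, x.2 + 1) ∧ (x ∈ f.horiz ∧ x ∈ dH)) ∨
    (y = (x.1, x.2 - 1) ∧ (1 ≤ x.2 ∧ (x.1, x.2 - 1) ∈ f.horiz ∧ (x.1, x.2 - 1) ∉ dH)) ∨
    (y = (x.1 + 1, x.2) ∧ (x ∈ f.vert ∧ x ∈ dV)) ∨
    (y = (x.1 - 1, x.2) ∧ (1 ≤ x.1 ∧ (x.1 - 1, x.2) ∈ f.vert ∧ (x.1 - 1, x.2) ∉ dV)) := by
  rcases h with ⟨hy, h1, h2⟩ | ⟨hx, h1, h2⟩ | ⟨hy, h1, h2⟩ | ⟨hx, h1, h2⟩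
  · exact Or.inl ⟨hy, h1, h2⟩
  · refine Or.inr (Or.inl ?_)
    have e1 : x.1 = y.1 := by rw [hx]
    have e2 : x.2 = y.2 + 1 := by rw [hx]
    have ey : y = (x.1, x.2 - 1) := by
      rw [Prod.ext_iff]; constructor <;> simp [e1, e2]
    refine ⟨ey, by omega, ?_, ?_⟩ <;> rw [← ey] <;> assumption
  · exact Or.inr (Or.inr (Or.inl ⟨hy, h1, h2⟩))
  · refine Or.inr (Or.inr (Or.inr ?_))
    have e1 : x.1 = y.1 + 1 := by rw [hx]
    have e2 : x.2 = y.2 := by rw [hx]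
    have ey : y = (x.1 - 1, x.2) := by
      rw [Prod.ext_iff]; constructor <;> simp [e1, e2]
    refine ⟨ey, by omega, ?_, ?_⟩ <;> rw [← ey] <;> assumption

lemma dir_in_cases {f : Config N} {dH dV : Set (ℕ × ℕ)} {x y : ℕ × ℕ}
    (h : Dir f dH dV y x) :
    (y = (x.1, x.2 + 1) ∧ (x ∈ f.horiz ∧ x ∉ dH)) ∨
    (y = (x.1, x.2 - 1) ∧ (1 ≤ x.2 ∧ (x.1, x.2 - 1) ∈ f.horiz ∧ (x.1, x.2 - 1) ∈ dH)) ∨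
    (y = (x.1 + 1, x.2) ∧ (x ∈ f.vert ∧ x ∉ dV)) ∨
    (y = (x.1 - 1, x.2) ∧ (1 ≤ x.1 ∧ (x.1 - 1, x.2) ∈ f.vert ∧ (x.1 - 1, x.2) ∈ dV)) := by
  rcases h with ⟨hx, h1, h2⟩ | ⟨hy, h1, h2⟩ | ⟨hx, h1, h2⟩ | ⟨hy, h1, h2⟩
  · refine Or.inr (Or.inl ?_)
    have e1 : x.1 = y.1 := by rw [hx]
    have e2 : x.2 = y.2 + 1 := by rw [hx]
    have ey : y = (x.1, x.2 - 1) := by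
      rw [Prod.ext_iff]; constructor <;> simp [e1, e2]
    refine ⟨ey, by omega, ?_, ?_⟩ <;> rw [← ey] <;> assumption
  · exact Or.inl ⟨hy, h1, h2⟩
  · refine Or.inr (Or.inr (Or.inr ?_))
    have e1 : x.1 = y.1 + 1 := by rw [hx]
    have e2 : x.2 = y.2 := by rw [hx]
    have ey : y = (x.1 - 1, x.2) := by
      rw [Prod.ext_iff]; constructor <;> simp [e1, e2]
    refine ⟨ey, by omega, ?_, ?_⟩ <;> rw [← ey] <;> assumption
  · exact Or.inr (Or.inr (Or.inl ⟨hy, h1, h2⟩))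

lemma dir_le_outdeg {f : Config N} {dH dV : Set (ℕ × ℕ)} {x y : ℕ × ℕ}
    (h : Dir f dH dV x y) : 1 ≤ outdeg f dH dV x := by
  unfold outdeg
  rcases dir_out_cases h with ⟨_, c⟩ | ⟨_, c⟩ | ⟨_, c⟩ | ⟨_, c⟩ <;> rw [if_pos c] <;> omega

lemma dir_le_indeg {f : Config N} {dH dV : Set (ℕ × ℕ)} {x y : ℕ × ℕ}
    (h : Dir f dH dV y x) : 1 ≤ indeg f dH dV x := by
  unfold indeg
  rcases dir_in_cases h with ⟨_, c⟩ | ⟨_, c⟩ | ⟨_, c⟩ | ⟨_, c⟩ <;> rw [if_pos c] <;> omega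

lemma dir_unique_out {f : Config N} {dH dV : Set (ℕ × ℕ)} {x y z : ℕ × ℕ}
    (h : outdeg f dH dV x ≤ 1) (hy : Dir f dH dV x y) (hz : Dir f dH dV x z) : y = z := by
  unfold outdeg at h
  rcases dir_out_cases hy with ⟨rfl, c1⟩ | ⟨rfl, c1⟩ | ⟨rfl, c1⟩ | ⟨rfl, c1⟩ <;>
  rcases dir_out_cases hz with ⟨rfl, c2⟩ | ⟨e2, c2⟩ | ⟨e2, c2⟩ | ⟨e2, c2⟩ <;>
  first
    | rfl
    | (exact e2.symm)
    | (exfalso; rw [if_pos c1, if_pos c2] at h; omega)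

lemma dir_unique_in {f : Config N} {dH dV : Set (ℕ × ℕ)} {x y z : ℕ × ℕ}
    (h : indeg f dH dV x ≤ 1) (hy : Dir f dH dV y x) (hz : Dir f dH dV z x) : y = z := by
  unfold indeg at h
  rcases dir_in_cases hy with ⟨rfl, c1⟩ | ⟨rfl, c1⟩ | ⟨rfl, c1⟩ | ⟨rfl, c1⟩ <;>
  rcases dir_in_cases hz with ⟨e2, c2⟩ | ⟨e2, c2⟩ | ⟨e2, c2⟩ | ⟨e2, c2⟩ <;>
  first
    | (exact e2.symm)
    | (exfalso; rw [if_pos c1, if_pos c2] at h; omega)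

lemma pair_split (P Q : Prop) [Decidable (P ∧ Q)] [Decidable (P ∧ ¬Q)] [Decidable P] :
    ((if P ∧ Q then 1 else 0) + (if P ∧ ¬Q then 1 else 0) : ℕ) = if P then 1 else 0 := by
  by_cases p : P <;> by_cases q : Q <;> simp [p, q]

lemma triple_split (A B C : Prop) [Decidable (A ∧ B ∧ C)] [Decidable (A ∧ B ∧ ¬C)]
    [Decidable (A ∧ B)] :
    ((if A ∧ B ∧ C then 1 else 0) + (if A ∧ B ∧ ¬C then 1 else 0) : ℕ) =
      if A ∧ B then 1 else 0 := by
  by_cases a : A <;> by_cases b : B <;> by_cases c : C <;> simp [a, b, c]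

lemma degsplit (f : Config N) (dH dV : Set (ℕ × ℕ)) (x : ℕ × ℕ) :
    outdeg f dH dV x + indeg f dH dV x = degree f x := by
  unfold outdeg indeg degree
  rw [← pair_split (x ∈ f.horiz) (x ∈ dH),
    ← triple_split (1 ≤ x.2) ((x.1, x.2 - 1) ∈ f.horiz) ((x.1, x.2 - 1) ∈ dH),
    ← pair_split (x ∈ f.vert) (x ∈ dV),
    ← triple_split (1 ≤ x.1) ((x.1 - 1, x.2) ∈ f.vert) ((x.1 - 1, x.2) ∈ dV)]
  ring

lemma walk_dir {f : Config N} {dH dV : Set (ℕ × ℕ)}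
    (hout1 : ∀ v, outdeg f dH dV v ≤ 1) (hin1 : ∀ v, indeg f dH dV v ≤ 1)
    {x y : ℕ × ℕ} (h : Relation.ReflTransGen (adj f) x y) :
    Relation.ReflTransGen (Dir f dH dV) x y ∨ Relation.ReflTransGen (Dir f dH dV) y x := by
  induction h with
  | refl => exact Or.inl .refl
  | @tail b c hxb hbc ih =>
    rcases (adj_iff_dir f dH dV b c).1 hbc with hD | hD
    · rcases ih with ih | ih
      · exact Or.inl (ih.tail hD)
      · rcases ih.cases_head with heq | ⟨w, hw, hrest⟩
        · exact Or.inl (Relation.ReflTransGen.single (heq ▸ hD))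
        · have hwc : w = c := dir_unique_out (hout1 b) hw hD
          exact Or.inr (hwc ▸ hrest)
    · rcases ih with ih | ih
      · rcases ih.cases_tail with heq | ⟨w, hw, hlast⟩
        · exact Or.inr (Relation.ReflTransGen.single (heq ▸ hD))
        · have hwc : w = c := dir_unique_in (hin1 b) hlast hD
          exact Or.inl (hwc ▸ hw)
      · exact Or.inr (Relation.ReflTransGen.head hD ih)

end Statement9Aux

/-- Let `f` be a subgraph of `G^N` satisfying conditions (1), (2), (3) of
the definition of a TFPL.  If the edges of `f` can be oriented so that every edge at an
`L_i` is outgoing, every edge at an `R_i` is incoming, and every other vertex of `G^N` is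
incident to exactly one incoming and one outgoing edge, then condition (4) holds
automatically: no path of `f` connects two of the `L_i` and none connects two of the `R_i`;
in particular `f` is a TFPL. -/
theorem orientation_implies_no_boundary_paths (N : ℕ) (f : Config N)
    (hH : ∀ p ∈ f.horiz, hSlot N p) (hV : ∀ p ∈ f.vert, vSlot N p)
    (hext : ∀ j : ℕ, (N, j) ∈ f.vert ↔ (1 ≤ j ∧ j ≤ 2 * N + 1 ∧ j % 2 = 0))
    (hdegL : ∀ i, 1 ≤ i → i ≤ N → degree f (Lvtx N i) ≤ 1)
    (hdegR : ∀ i, 1 ≤ i → i ≤ N → degree f (Rvtx N i) ≤ 1)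
    (hdeg2 : ∀ r c, 1 ≤ r → r ≤ N → N + 1 - r ≤ c → c ≤ N + 1 + r → c ≠ N + 1 - r →
        c ≠ N + 1 + r → degree f (r, c) = 2)
    (hor : ∃ dH dV : Set (ℕ × ℕ),
      (∀ i, 1 ≤ i → i ≤ N →
          (Lvtx N i ∈ f.horiz → Lvtx N i ∈ dH) ∧ (Lvtx N i ∈ f.vert → Lvtx N i ∈ dV)) ∧
      (∀ i, 1 ≤ i → i ≤ N →
          ((i, N + i) ∈ f.horiz → (i, N + i) ∈ dH) ∧ (Rvtx N i ∈ f.vert → Rvtx N i ∉ dV)) ∧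
      (∀ r c, 1 ≤ r → r ≤ N → N + 1 - r ≤ c → c ≤ N + 1 + r → c ≠ N + 1 - r →
          c ≠ N + 1 + r → outdeg f dH dV (r, c) = 1 ∧ indeg f dH dV (r, c) = 1)) :
    (∀ i j, 1 ≤ i → i ≤ N → 1 ≤ j → j ≤ N → i ≠ j →
        ¬ connectedIn f (Lvtx N i) (Lvtx N j)) ∧
    (∀ i j, 1 ≤ i → i ≤ N → 1 ≤ j → j ≤ N → i ≠ j →
        ¬ connectedIn f (Rvtx N i) (Rvtx N j)) ∧
    IsTFPL N f := by
  obtain ⟨dH, dV, horL, horR, horI⟩ := hor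
  rcases Nat.eq_zero_or_pos N with hN | hN
  · exact ⟨fun i j h1 h2 _ _ _ => absurd h2 (by omega),
      fun i j h1 h2 _ _ _ => absurd h2 (by omega), hH, hV, hext, hdegL, hdegR, hdeg2,
      fun i j h1 h2 _ _ _ => absurd h2 (by omega),
      fun i j h1 h2 _ _ _ => absurd h2 (by omega)⟩
  -- vertices outside the rows of the grid have degree at most 1
  have hdeg_off : ∀ v : ℕ × ℕ,
      ¬(1 ≤ v.1 ∧ v.1 ≤ N ∧ N + 1 - v.1 ≤ v.2 ∧ v.2 ≤ N + 1 + v.1) → degree f v ≤ 1 := by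
    intro v hn
    have t1 : v ∉ f.horiz := by
      intro h; have := hH _ h; unfold hSlot at this; omega
    have t2 : ¬(1 ≤ v.2 ∧ (v.1, v.2 - 1) ∈ f.horiz) := by
      rintro ⟨hc, h⟩; have := hH _ h; unfold hSlot at this; dsimp only at this; omega
    have t3 : v ∉ f.vert := by
      intro h; have := hV _ h; unfold vSlot at this; omega
    unfold degree
    rw [if_neg (by intro h; exact t1 h), if_neg t2, if_neg (by intro h; exact t3 h)]
    split <;> omega
  have hbound : ∀ v : ℕ × ℕ, outdeg f dH dV v ≤ 1 ∧ indeg f dH dV v ≤ 1 := by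
    intro v
    have hsplit := degsplit f dH dV v
    by_cases h1 : 1 ≤ v.1 ∧ v.1 ≤ N ∧ N + 1 - v.1 ≤ v.2 ∧ v.2 ≤ N + 1 + v.1
    · by_cases h2 : v.2 = N + 1 - v.1
      · have hL : Lvtx N v.2 = v := by
          unfold Lvtx; rw [Prod.ext_iff]; constructor <;> simp <;> omega
        have hd := hdegL v.2 (by omega) (by omega)
        rw [hL] at hd; omega
      · by_cases h3 : v.2 = N + 1 + v.1
        · have hR : Rvtx N v.1 = v := by
            unfold Rvtx; rw [Prod.ext_iff]; constructor <;> simp <;> omega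
          have hd := hdegR v.1 (by omega) (by omega)
          rw [hR] at hd; omega
        · have hio := horI v.1 v.2 (by omega) (by omega) (by omega) (by omega) h2 h3
          rw [Prod.mk.eta] at hio
          omega
    · have hd := hdeg_off v h1
      omega
  -- no incoming edges at the left boundary vertices
  have hinL : ∀ i, 1 ≤ i → i ≤ N → indeg f dH dV (Lvtx N i) = 0 := by
    intro i hi1 hi2
    have n1 : ¬(Lvtx N i ∈ f.horiz ∧ Lvtx N i ∉ dH) :=
      fun ⟨h, hnd⟩ => hnd ((horL i hi1 hi2).1 h)
    have n2 : ¬(1 ≤ (Lvtx N i).2 ∧ ((Lvtx N i).1, (Lvtx N i).2 - 1) ∈ f.horiz ∧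
        ((Lvtx N i).1, (Lvtx N i).2 - 1) ∈ dH) := by
      rintro ⟨-, h, -⟩
      have := hH _ h; unfold hSlot at this; simp only [Lvtx] at this; omega
    have n3 : ¬(Lvtx N i ∈ f.vert ∧ Lvtx N i ∉ dV) :=
      fun ⟨h, hnd⟩ => hnd ((horL i hi1 hi2).2 h)
    have n4 : ¬(1 ≤ (Lvtx N i).1 ∧ ((Lvtx N i).1 - 1, (Lvtx N i).2) ∈ f.vert ∧
        ((Lvtx N i).1 - 1, (Lvtx N i).2) ∈ dV) := by
      rintro ⟨-, h, -⟩
      have := hV _ h; unfold vSlot at this; simp only [Lvtx] at this; omega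
    unfold indeg
    rw [if_neg n1, if_neg n2, if_neg n3, if_neg n4]
  -- no outgoing edges at the right boundary vertices
  have houtR : ∀ i, 1 ≤ i → i ≤ N → outdeg f dH dV (Rvtx N i) = 0 := by
    intro i hi1 hi2
    have n1 : ¬(Rvtx N i ∈ f.horiz ∧ Rvtx N i ∈ dH) := by
      rintro ⟨h, -⟩
      have := hH _ h; unfold hSlot at this; simp only [Rvtx] at this; omega
    have n2 : ¬(1 ≤ (Rvtx N i).2 ∧ ((Rvtx N i).1, (Rvtx N i).2 - 1) ∈ f.horiz ∧
        ((Rvtx N i).1, (Rvtx N i).2 - 1) ∉ dH) := by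
      rintro ⟨-, h, hnd⟩
      have he : ((Rvtx N i).1, (Rvtx N i).2 - 1) = ((i : ℕ), N + i) := by
        unfold Rvtx; rw [Prod.ext_iff]; constructor <;> simp <;> omega
      rw [he] at h hnd
      exact hnd ((horR i hi1 hi2).1 h)
    have n3 : ¬(Rvtx N i ∈ f.vert ∧ Rvtx N i ∈ dV) :=
      fun ⟨h, hd⟩ => (horR i hi1 hi2).2 h hd
    have n4 : ¬(1 ≤ (Rvtx N i).1 ∧ ((Rvtx N i).1 - 1, (Rvtx N i).2) ∈ f.vert ∧
        ((Rvtx N i).1 - 1, (Rvtx N i).2) ∉ dV) := by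
      rintro ⟨-, h, -⟩
      have := hV _ h; unfold vSlot at this; simp only [Rvtx] at this; omega
    unfold outdeg
    rw [if_neg n1, if_neg n2, if_neg n3, if_neg n4]
  have hout1 : ∀ v, outdeg f dH dV v ≤ 1 := fun v => (hbound v).1
  have hin1 : ∀ v, indeg f dH dV v ≤ 1 := fun v => (hbound v).2
  have noLL : ∀ i j, 1 ≤ i → i ≤ N → 1 ≤ j → j ≤ N → i ≠ j →
      ¬ connectedIn f (Lvtx N i) (Lvtx N j) := by
    intro i j hi1 hi2 hj1 hj2 hij hc
    have hne : Lvtx N i ≠ Lvtx N j := by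
      intro he
      have : (Lvtx N i).2 = (Lvtx N j).2 := by rw [he]
      simp only [Lvtx] at this; exact hij this
    rcases walk_dir hout1 hin1 hc with h | h
    · rcases h.cases_tail with heq | ⟨w, -, hlast⟩
      · exact hne heq.symm
      · have := dir_le_indeg hlast; rw [hinL j hj1 hj2] at this; omega
    · rcases h.cases_tail with heq | ⟨w, -, hlast⟩
      · exact hne heq
      · have := dir_le_indeg hlast; rw [hinL i hi1 hi2] at this; omega
  have noRR : ∀ i j, 1 ≤ i → i ≤ N → 1 ≤ j → j ≤ N → i ≠ j →
      ¬ connectedIn f (Rvtx N i) (Rvtx N j) := by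
    intro i j hi1 hi2 hj1 hj2 hij hc
    have hne : Rvtx N i ≠ Rvtx N j := by
      intro he
      have : (Rvtx N i).1 = (Rvtx N j).1 := by rw [he]
      simp only [Rvtx] at this; exact hij this
    rcases walk_dir hout1 hin1 hc with h | h
    · rcases h.cases_head with heq | ⟨w, hfirst, -⟩
      · exact hne heq
      · have := dir_le_outdeg hfirst; rw [houtR i hi1 hi2] at this; omega
    · rcases h.cases_head with heq | ⟨w, hfirst, -⟩
      · exact hne heq.symm
      · have := dir_le_outdeg hfirst; rw [houtR j hj1 hj2] at this; omega
  exact ⟨noLL, noRR, hH, hV, hext, hdegL, hdegR, hdeg2, noLL, noRR⟩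

end TFPLFormal
end
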